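/- The alternating sum annihilates weakly increasing basis vectors: suppose n ≥ N + 2. If u ∈ S is weakly increasing, i.e. u_1 ≤ u_2 ≤ ⋯ ≤ u_n, then ( ∑_{w ∈ S_n} sgn(w)·P_w ) e_u = 0, where P_w = M_{i_1}⋯M_{i_ℓ} for any reduced word (i_1,…,i_ℓ) of w and sgn(w) = ±1 is the sign of w viewed in F. -/

import Mathlib

open Matrix

/-- The tuple `u` with the entries in positions `i` and `i+1` interchanged
(0-indexed; returns `u` unchanged if `i+1` is out of range). -/
def swapTup (n N : ℕ) (i : ℕ) (u : Fin n → Fin (N + 1)) : Fin n → Fin (N + 1) :=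
  if h : i + 1 < n then u ∘ Equiv.swap ⟨i, Nat.lt_of_succ_lt h⟩ ⟨i + 1, h⟩ else u

/-- Jones's bowling-ball matrix `M_i` (0-indexed: `i` ranges over `0,…,n-2`,
corresponding to the lanes `i+1` and `i+2` in 1-indexed notation; it is the
identity matrix out of range).  Rows and columns are indexed by the tuples
`u : Fin n → Fin (N+1)` recording the number of balls in each lane:
`M_i e_u = e_{s_i u}` if `u i ≤ u (i+1)`, and
`M_i e_u = q • e_{s_i u} + (1-q) • e_u` if `u i > u (i+1)`. -/
def bowlM (F : Type*) [Field F] (q : F) (n N : ℕ) (i : ℕ) :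
    Matrix (Fin n → Fin (N + 1)) (Fin n → Fin (N + 1)) F :=
  if h : i + 1 < n then
    Matrix.of fun v u =>
      if u ⟨i, Nat.lt_of_succ_lt h⟩ ≤ u ⟨i + 1, h⟩ then
        (if v = swapTup n N i u then 1 else 0)
      else
        q * (if v = swapTup n N i u then 1 else 0) + (1 - q) * (if v = u then 1 else 0)
  else 1
/-- The adjacent transposition `s_i = (i, i+1)` of `Fin n`
(0-indexed; the identity permutation out of range). -/
def adjSwap (n : ℕ) (i : ℕ) : Equiv.Perm (Fin n) :=
  if h : i + 1 < n then Equiv.swap ⟨i, Nat.lt_of_succ_lt h⟩ ⟨i + 1, h⟩ else 1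

/-- The number of inversions of a permutation `w` of `Fin n`:
the number of pairs `i < j` with `w j < w i`. -/
def inversions (n : ℕ) (w : Equiv.Perm (Fin n)) : ℕ :=
  (Finset.univ.filter fun p : Fin n × Fin n => p.1 < p.2 ∧ w p.2 < w p.1).card

/-- A list `l` of indices (0-indexed, each in `{0, …, n-2}`) is a reduced word
for the permutation `w` if `w` is the composite of the corresponding adjacent
transpositions and the length of `l` equals the number of inversions of `w`. -/
def IsReducedWord (n : ℕ) (w : Equiv.Perm (Fin n)) (l : List ℕ) : Prop :=
  (∀ i ∈ l, i + 1 < n) ∧ (l.map (adjSwap n)).prod = w ∧ l.length = inversions n w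

/-- The product `M_{i_1} ⋯ M_{i_ℓ}` of bowling-ball matrices along a word. -/
def prodBowlM (F : Type*) [Field F] (q : F) (n N : ℕ) (l : List ℕ) :
    Matrix (Fin n → Fin (N + 1)) (Fin n → Fin (N + 1)) F :=
  (l.map (bowlM F q n N)).prod

/-!
Since `n > N + 1`, a weakly increasing `u` has two equal adjacent entries `u_j = u_{j+1}`.
A reduced word never swaps two lanes that are already out of order, so along it every
bowling-ball matrix meets a basis vector whose two lanes are weakly increasing and merely
permutes it: `P_w e_u = e_{u ∘ w⁻¹}`. Hence `w` and `w s_j` contribute the same basis vector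
with opposite signs.
-/

theorem Equiv.Perm.sum_sign_smul_eq_zero_of_mul_swap {α R M : Type*} [DecidableEq α] [Fintype α]
    [Ring R] [AddCommGroup M] [Module R M] (f : Equiv.Perm α → M) {i j : α} (hij : i ≠ j)
    (hf : ∀ w, f (w * Equiv.swap i j) = f w) :
    ∑ w : Equiv.Perm α, ((Equiv.Perm.sign w : ℤ) : R) • f w = 0 :=
  Finset.sum_ninvolution (· * Equiv.swap i j)
    (fun w => by simp [hf, Equiv.Perm.sign_swap hij])
    (fun _ _ => (not_congr Equiv.mul_swap_eq_iff).mpr hij) (fun _ => Finset.mem_univ _)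
    (Equiv.mul_swap_involutive i j)

theorem Monotone.exists_apply_eq_apply_succ {α : Type*} [PartialOrder α] [Fintype α] {n : ℕ}
    {u : Fin n → α} (hu : Monotone u) (hcard : Fintype.card α < n) :
    ∃ i : ℕ, ∃ h : i + 1 < n, u ⟨i, Nat.lt_of_succ_lt h⟩ = u ⟨i + 1, h⟩ := by
  obtain ⟨x, y, hxy, hu_eq⟩ := Fintype.exists_ne_map_eq_of_card_lt u (by simpa using hcard)
  wlog hlt : x < y generalizing x y
  · exact this y x hxy.symm hu_eq.symm (lt_of_le_of_ne (not_lt.1 hlt) hxy.symm)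
  have hsucc : (x : ℕ) + 1 < n := by omega
  refine ⟨x, hsucc, le_antisymm (hu (Fin.le_def.2 (by simp))) ?_⟩
  calc u ⟨x + 1, hsucc⟩ ≤ u y := hu (Fin.le_def.2 (by simpa using hlt))
    _ = u x := hu_eq.symm

section Inversions

variable {n : ℕ}

theorem adjSwap_of_lt {i : ℕ} (h : i + 1 < n) :
    adjSwap n i = Equiv.swap ⟨i, Nat.lt_of_succ_lt h⟩ ⟨i + 1, h⟩ := dif_pos h

theorem adjSwap_mul_self (i : ℕ) : adjSwap n i * adjSwap n i = 1 := by
  unfold adjSwap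
  split_ifs <;> simp

theorem adjSwap_inv (i : ℕ) : (adjSwap n i)⁻¹ = adjSwap n i :=
  inv_eq_of_mul_eq_one_right (adjSwap_mul_self i)

theorem adjSwap_lt_adjSwap_iff {i : ℕ} (h : i + 1 < n) {x y : Fin n}
    (hxy : ¬(x = ⟨i, Nat.lt_of_succ_lt h⟩ ∧ y = ⟨i + 1, h⟩))
    (hyx : ¬(y = ⟨i, Nat.lt_of_succ_lt h⟩ ∧ x = ⟨i + 1, h⟩)) :
    adjSwap n i x < adjSwap n i y ↔ x < y := by
  rcases x with ⟨x, hx⟩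
  rcases y with ⟨y, hy⟩
  simp only [Fin.mk.injEq] at hxy hyx
  simp only [adjSwap_of_lt h, Equiv.swap_apply_def, Fin.mk.injEq]
  split_ifs <;> simp only [Fin.mk_lt_mk] <;> omega

theorem inversions_adjSwap_mul {i : ℕ} (h : i + 1 < n) {τ : Equiv.Perm (Fin n)}
    (hτ : τ⁻¹ ⟨i, Nat.lt_of_succ_lt h⟩ < τ⁻¹ ⟨i + 1, h⟩) :
    inversions n (adjSwap n i * τ) = inversions n τ + 1 := by
  set a : Fin n := ⟨i, Nat.lt_of_succ_lt h⟩
  set b : Fin n := ⟨i + 1, h⟩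
  have hab : a < b := Fin.mk_lt_mk.2 i.lt_succ_self
  have hadj : adjSwap n i = Equiv.swap a b := adjSwap_of_lt h
  have key : Finset.univ.filter (fun p : Fin n × Fin n => p.1 < p.2 ∧
        (adjSwap n i * τ) p.2 < (adjSwap n i * τ) p.1) =
      insert (τ⁻¹ a, τ⁻¹ b)
        (Finset.univ.filter fun p : Fin n × Fin n => p.1 < p.2 ∧ τ p.2 < τ p.1) := by
    ext ⟨x, y⟩
    simp only [Finset.mem_filter, Finset.mem_univ, true_and, Finset.mem_insert, Prod.mk.injEq]
    simp only [Equiv.Perm.mul_apply, Equiv.Perm.eq_inv_iff_eq]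
    by_cases hx : τ x = a ∧ τ y = b
    · have hlt : x < y := by simpa [← hx.1, ← hx.2] using hτ
      simp [hx.1, hx.2, hadj, hlt, hab]
    by_cases hy : τ y = a ∧ τ x = b
    · have hlt : y < x := by simpa [← hy.1, ← hy.2] using hτ
      simp [hy.1, hy.2, hlt.not_gt, hab.ne']
    rw [adjSwap_lt_adjSwap_iff h (by tauto) (by tauto)]
    tauto
  rw [inversions, inversions, key, Finset.card_insert_of_notMem]
  simp [hab.le]

theorem inversions_adjSwap_mul_of_gt {i : ℕ} (h : i + 1 < n) {τ : Equiv.Perm (Fin n)}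
    (hτ : τ⁻¹ ⟨i + 1, h⟩ < τ⁻¹ ⟨i, Nat.lt_of_succ_lt h⟩) :
    inversions n (adjSwap n i * τ) + 1 = inversions n τ := by
  have hτ' : (adjSwap n i * τ)⁻¹ ⟨i, Nat.lt_of_succ_lt h⟩ < (adjSwap n i * τ)⁻¹ ⟨i + 1, h⟩ := by
    simpa [adjSwap_of_lt h] using hτ
  simpa [← mul_assoc, adjSwap_mul_self] using (inversions_adjSwap_mul h hτ').symm

theorem inversions_adjSwap_mul_le (i : ℕ) (τ : Equiv.Perm (Fin n)) :
    inversions n (adjSwap n i * τ) ≤ inversions n τ + 1 := by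
  by_cases h : i + 1 < n
  · rcases lt_trichotomy (τ⁻¹ ⟨i, Nat.lt_of_succ_lt h⟩) (τ⁻¹ ⟨i + 1, h⟩) with hlt | heq | hgt
    · exact (inversions_adjSwap_mul h hlt).le
    · simp at heq
    · have := inversions_adjSwap_mul_of_gt h hgt
      omega
  · simp [adjSwap, h]

theorem inversions_one : inversions n 1 = 0 := by
  rw [inversions, Finset.card_eq_zero, Finset.filter_eq_empty_iff]
  exact fun p _ hp => lt_asymm hp.1 hp.2

theorem inversions_list_prod_le (l : List ℕ) :
    inversions n (l.map (adjSwap n)).prod ≤ l.length := by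
  induction l with
  | nil => simp [inversions_one]
  | cons i t ih =>
    simpa using (inversions_adjSwap_mul_le i _).trans (Nat.add_le_add_right ih 1)

theorem exists_apply_succ_lt_apply_of_ne_one {w : Equiv.Perm (Fin n)} (hw : w ≠ 1) :
    ∃ i : ℕ, ∃ h : i + 1 < n, w ⟨i + 1, h⟩ < w ⟨i, Nat.lt_of_succ_lt h⟩ := by
  by_contra! hc
  apply hw
  cases n with
  | zero => exact Subsingleton.elim _ _
  | succ m =>
    have hmono : Monotone w := Fin.monotone_iff_le_succ.2 fun i => hc i (by omega)
    exact Equiv.ext (congrFun (hmono.strictMono_of_injective w.injective).eq_id)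

theorem IsReducedWord.cons {τ : Equiv.Perm (Fin n)} {i : ℕ} {l : List ℕ} (h : i + 1 < n)
    (hl : IsReducedWord n τ l) (hτ : inversions n (adjSwap n i * τ) = inversions n τ + 1) :
    IsReducedWord n (adjSwap n i * τ) (i :: l) := by
  obtain ⟨hidx, hprod, hlen⟩ := hl
  refine ⟨?_, by simp [hprod], by simp [hlen, hτ]⟩
  rintro j (_ | ⟨_, hj⟩)
  exacts [h, hidx j hj]

theorem exists_isReducedWord (w : Equiv.Perm (Fin n)) : ∃ l, IsReducedWord n w l := by
  rcases eq_or_ne w 1 with rfl | hw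
  · exact ⟨[], by simp, by simp, by simp [inversions_one]⟩
  obtain ⟨i, h, hi⟩ := exists_apply_succ_lt_apply_of_ne_one (inv_ne_one.2 hw)
  have hdesc := inversions_adjSwap_mul_of_gt h hi
  obtain ⟨l, hl⟩ := exists_isReducedWord (adjSwap n i * w)
  have hcons := hl.cons h (by rw [← mul_assoc, adjSwap_mul_self, one_mul]; omega)
  rw [← mul_assoc, adjSwap_mul_self, one_mul] at hcons
  exact ⟨_, hcons⟩
termination_by inversions n w

theorem IsReducedWord.tail {w : Equiv.Perm (Fin n)} {i : ℕ} {t : List ℕ}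
    (hw : IsReducedWord n w (i :: t)) : IsReducedWord n (t.map (adjSwap n)).prod t := by
  obtain ⟨hidx, hprod, hlen⟩ := hw
  refine ⟨fun j hj => hidx j (List.mem_cons_of_mem _ hj), rfl,
    le_antisymm ?_ (inversions_list_prod_le t)⟩
  have := inversions_adjSwap_mul_le i (t.map (adjSwap n)).prod
  simp only [List.length_cons, ← hprod, List.map_cons, List.prod_cons] at hlen
  omega

theorem IsReducedWord.inv_lt_inv_of_cons {w : Equiv.Perm (Fin n)} {i : ℕ} {t : List ℕ}
    (hw : IsReducedWord n w (i :: t)) (h : i + 1 < n) :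
    (t.map (adjSwap n)).prod⁻¹ ⟨i, Nat.lt_of_succ_lt h⟩ <
      (t.map (adjSwap n)).prod⁻¹ ⟨i + 1, h⟩ := by
  obtain ⟨-, hprod, hlen⟩ := hw
  rcases lt_trichotomy ((t.map (adjSwap n)).prod⁻¹ ⟨i, Nat.lt_of_succ_lt h⟩)
    ((t.map (adjSwap n)).prod⁻¹ ⟨i + 1, h⟩) with hlt | heq | hgt
  · exact hlt
  · simp at heq
  · -- otherwise `w = s_i τ` would have fewer inversions than `t` has letters
    have := inversions_adjSwap_mul_of_gt h hgt
    have := inversions_list_prod_le (n := n) t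
    simp only [List.length_cons, ← hprod, List.map_cons, List.prod_cons] at hlen
    omega

end Inversions

section BowlingBall

variable {F : Type*} [Field F] (q : F) {n N : ℕ}

theorem swapTup_eq_comp_adjSwap (i : ℕ) (v : Fin n → Fin (N + 1)) :
    swapTup n N i v = v ∘ adjSwap n i := by
  unfold swapTup adjSwap
  split_ifs <;> rfl

theorem bowlM_mulVec_single_of_le {i : ℕ} (h : i + 1 < n) {v : Fin n → Fin (N + 1)}
    (hv : v ⟨i, Nat.lt_of_succ_lt h⟩ ≤ v ⟨i + 1, h⟩) :
    bowlM F q n N i *ᵥ Pi.single v 1 = Pi.single (v ∘ adjSwap n i) 1 := by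
  ext x
  simp [bowlM, h, hv, Pi.single_apply, swapTup_eq_comp_adjSwap]

theorem prodBowlM_mulVec_single_of_monotone {u : Fin n → Fin (N + 1)} (hu : Monotone u)
    {w : Equiv.Perm (Fin n)} {l : List ℕ} (hw : IsReducedWord n w l) :
    prodBowlM F q n N l *ᵥ Pi.single u 1 = Pi.single (u ∘ ⇑w⁻¹) 1 := by
  induction l generalizing w with
  | nil =>
    rw [← hw.2.1]
    simp only [prodBowlM, List.map_nil, List.prod_nil, one_mulVec]
    rfl
  | cons i t ih =>
    have h : i + 1 < n := hw.1 i List.mem_cons_self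
    have hle := hu (hw.inv_lt_inv_of_cons h).le
    rw [← hw.2.1, prodBowlM, List.map_cons, List.prod_cons, ← mulVec_mulVec, ← prodBowlM,
      ih hw.tail, bowlM_mulVec_single_of_le q h hle]
    simp [Function.comp_assoc, adjSwap_inv]

end BowlingBall

theorem alternating_sum_kills_monotone_general (F : Type*) [Field F] (q : F) (n N : ℕ)
    (hnN : N + 2 ≤ n)
    (P : Equiv.Perm (Fin n) → Matrix (Fin n → Fin (N + 1)) (Fin n → Fin (N + 1)) F)
    (hP : ∀ w l, IsReducedWord n w l → P w = prodBowlM F q n N l)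
    (u : Fin n → Fin (N + 1)) (hu : Monotone u) :
    (∑ w : Equiv.Perm (Fin n), ((Equiv.Perm.sign w : ℤ) : F) • P w) *ᵥ Pi.single u 1 = 0 := by
  obtain ⟨j, hj, hju⟩ := hu.exists_apply_eq_apply_succ (by rw [Fintype.card_fin]; omega)
  have hterm (w : Equiv.Perm (Fin n)) : P w *ᵥ Pi.single u 1 = Pi.single (u ∘ ⇑w⁻¹) 1 := by
    obtain ⟨l, hl⟩ := exists_isReducedWord w
    rw [hP w l hl, prodBowlM_mulVec_single_of_monotone q hu hl]
  simp only [Matrix.sum_mulVec, Matrix.smul_mulVec, hterm]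
  have hne : (⟨j, Nat.lt_of_succ_lt hj⟩ : Fin n) ≠ ⟨j + 1, hj⟩ := by simp
  refine Equiv.Perm.sum_sign_smul_eq_zero_of_mul_swap _ hne fun w => ?_
  have hswap : u ∘ Equiv.swap _ _ = u := funext fun x => Equiv.apply_swap_eq_self hju x
  rw [_root_.mul_inv_rev, Equiv.swap_inv, Equiv.Perm.coe_mul, ← Function.comp_assoc, hswap]

/-- **The alternating sum annihilates weakly increasing basis vectors.**
Suppose `n ≥ N + 2` and let `P w` be the product of bowling-ball matrices
along any reduced word of `w` (the hypothesis `hP` pins down `P` since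
every permutation has a reduced word).  If `u` is weakly increasing, then
`(∑_w sgn(w)·P_w) e_u = 0`. -/
theorem alternating_sum_kills_monotone (F : Type*) [Field F] (q : F) (n N : ℕ)
    (hn : 2 ≤ n) (hN : 1 ≤ N) (hnN : N + 2 ≤ n)
    (P : Equiv.Perm (Fin n) → Matrix (Fin n → Fin (N + 1)) (Fin n → Fin (N + 1)) F)
    (hP : ∀ w l, IsReducedWord n w l → P w = prodBowlM F q n N l)
    (u : Fin n → Fin (N + 1)) (hu : Monotone u) :
    (∑ w : Equiv.Perm (Fin n), ((Equiv.Perm.sign w : ℤ) : F) • P w) *ᵥ Pi.single u 1 = 0 :=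
  alternating_sum_kills_monotone_general F q n N hnN P hP u hu
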